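/- arXiv:2503.03738 — 2 statements merged into one kernel-verified Lean document; each statement's English description precedes it below -/
import Mathlib

section
/- Let g : U → ℂ be holomorphic on a domain U ⊆ ℂ with a fixed point z₀ such that |g'(z₀)| = 1, and suppose there exist L > 0 and η > 0 such that |log |g'(x)|| ≤ L·|x − z₀| for all x ∈ B(z₀, η). Then for every δ > 0 and every α > 0 there exists n₀ such that for all n ≥ n₀, all i with 0 ≤ i ≤ n, and every r ≤ r₀·exp(−nδ) (for r₀ small enough), g^i maps B(z₀, r) into B(z₀, r·exp(nδα)). -/
/-! Choose `ρ` with `B(z₀, ρ) ⊆ U ∩ B(z₀, η)` and `L ρ ≤ δ · min α 1`. On `B(z₀, ρ)` the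
log-Lipschitz bound gives `|g'| ≤ exp (L ρ)`, so by the mean value theorem each application of `g`
multiplies the distance to the fixed point `z₀` by at most `exp (L ρ)`. Starting at radius
`r ≤ ρ e^{-nδ}`, after `j ≤ n` steps the radius is at most `r e^{jLρ} ≤ r e^{nδ} ≤ ρ`, so the orbit
never leaves `B(z₀, ρ)`, and the final radius is at most `r e^{nδα}`. -/

open Metric Function

theorem Real.le_exp_of_abs_log_le {x c : ℝ} (h : |Real.log x| ≤ c) : x ≤ Real.exp c :=
  (Real.le_exp_log x).trans (Real.exp_le_exp.mpr ((le_abs_self _).trans h))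

theorem dist_iterate_le_pow_mul {X : Type*} [PseudoMetricSpace X] {f : X → X} {z₀ : X}
    {K s : ℝ} (hK : 0 ≤ K) (hf : ∀ x ∈ ball z₀ s, dist (f x) z₀ ≤ K * dist x z₀) {x : X}
    {n : ℕ} (hx : ∀ j < n, K ^ j * dist x z₀ < s) : dist (f^[n] x) z₀ ≤ K ^ n * dist x z₀ := by
  induction n with
  | zero => simp
  | succ n ih =>
    specialize ih fun j hj => hx j (by omega)
    rw [iterate_succ_apply', pow_succ', mul_assoc]
    calc dist (f (f^[n] x)) z₀ ≤ K * dist (f^[n] x) z₀ := hf _ (ih.trans_lt (hx n n.lt_succ_self))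
      _ ≤ K * (K ^ n * dist x z₀) := mul_le_mul_of_nonneg_left ih hK

theorem dist_apply_le_exp_mul_dist_of_abs_log_norm_deriv_le {𝕜 : Type*} [RCLike 𝕜]
    {g : 𝕜 → 𝕜} {z₀ : 𝕜} {ρ L : ℝ} (hL : 0 ≤ L) (hg : DifferentiableOn 𝕜 g (ball z₀ ρ))
    (hfix : g z₀ = z₀) (hlog : ∀ y ∈ ball z₀ ρ, |Real.log ‖deriv g y‖| ≤ L * ‖y - z₀‖) :
    ∀ x ∈ ball z₀ ρ, dist (g x) z₀ ≤ Real.exp (L * ρ) * dist x z₀ := by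
  intro x hx
  have hderiv : ∀ y ∈ ball z₀ ρ, ‖deriv g y‖ ≤ Real.exp (L * ρ) := fun y hy =>
    Real.le_exp_of_abs_log_le <| (hlog y hy).trans <|
      mul_le_mul_of_nonneg_left (mem_ball_iff_norm.mp hy).le hL
  have hmvt := (convex_ball z₀ ρ).norm_image_sub_le_of_norm_deriv_le
    (fun y hy => hg.differentiableAt (isOpen_ball.mem_nhds hy)) hderiv
    (mem_ball_self (pos_of_mem_ball hx)) hx
  rwa [hfix, ← dist_eq_norm, ← dist_eq_norm] at hmvt

theorem stmt_0_general (U : Set ℂ) (hU : IsOpen U) (g : ℂ → ℂ)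
    (hg : DifferentiableOn ℂ g U) (z₀ : ℂ) (hz₀ : z₀ ∈ U) (hfix : g z₀ = z₀)
    (L η : ℝ) (hL : 0 < L) (hη : 0 < η)
    (hlip : ∀ x ∈ ball z₀ η, |Real.log ‖deriv g x‖| ≤ L * ‖x - z₀‖) :
    ∀ δ > (0:ℝ), ∀ α > (0:ℝ), ∃ r₀ > (0:ℝ), ∃ n₀ : ℕ, ∀ n ≥ n₀, ∀ i ≤ n,
      ∀ r : ℝ, 0 < r → r ≤ r₀ * Real.exp (-(n:ℝ) * δ) →
        g^[i] '' ball z₀ r ⊆ ball z₀ (r * Real.exp ((n:ℝ) * δ * α)) := by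
  intro δ hδ α hα
  obtain ⟨ε, hε, hεU⟩ := Metric.isOpen_iff.mp hU z₀ hz₀
  set ρ := min (min ε η) (δ * min α 1 / L)
  have hρ : 0 < ρ := by positivity
  have hLρ : L * ρ ≤ δ * min α 1 := (le_div_iff₀' hL).mp (min_le_right _ _)
  have hρε : ball z₀ ρ ⊆ ball z₀ ε := ball_subset_ball ((min_le_left _ _).trans (min_le_left _ _))
  have hρη : ball z₀ ρ ⊆ ball z₀ η := ball_subset_ball ((min_le_left _ _).trans (min_le_right _ _))
  have hstep := dist_apply_le_exp_mul_dist_of_abs_log_norm_deriv_le hL.le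
    (hg.mono (hρε.trans hεU)) hfix fun y hy => hlip y (hρη hy)
  refine ⟨ρ, hρ, 0, fun n _ i hi r hr hrρ => ?_⟩
  have hpow : ∀ j ≤ n, ∀ c, min α 1 ≤ c → Real.exp (L * ρ) ^ j ≤ Real.exp (n * δ * c) := by
    intro j hj c hc
    rw [← Real.exp_nat_mul, Real.exp_le_exp]
    have hjn : (j : ℝ) ≤ n := by exact_mod_cast hj
    calc (j : ℝ) * (L * ρ) ≤ n * (δ * min α 1) := by gcongr
      _ ≤ n * δ * c := by rw [mul_assoc]; gcongr
  rintro _ ⟨x, hx, rfl⟩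
  have hxr : dist x z₀ < r := hx
  have horbit : ∀ j < i, Real.exp (L * ρ) ^ j * dist x z₀ < ρ := fun j hj =>
    calc Real.exp (L * ρ) ^ j * dist x z₀ < Real.exp (n * δ * 1) * r :=
          mul_lt_mul' (hpow j (by omega) 1 (min_le_right _ _)) hxr dist_nonneg (Real.exp_pos _)
      _ ≤ Real.exp (n * δ) * (ρ * Real.exp (-n * δ)) := by rw [mul_one]; gcongr
      _ = ρ := by rw [mul_left_comm, ← Real.exp_add]; simp
  calc dist (g^[i] x) z₀ ≤ Real.exp (L * ρ) ^ i * dist x z₀ :=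
        dist_iterate_le_pow_mul (Real.exp_pos _).le hstep horbit
    _ < Real.exp (n * δ * α) * r :=
        mul_lt_mul' (hpow i hi α (min_le_left _ _)) hxr dist_nonneg (Real.exp_pos _)
    _ = r * Real.exp (n * δ * α) := mul_comm _ _

/-- iterates of a holomorphic map with neutral fixed point move
exponentially small discs only slightly. -/
theorem stmt_0 (U : Set ℂ) (hU : IsOpen U) (g : ℂ → ℂ)
    (hg : DifferentiableOn ℂ g U) (z₀ : ℂ) (hz₀ : z₀ ∈ U) (hfix : g z₀ = z₀)
    (hder : ‖deriv g z₀‖ = 1) (L η : ℝ) (hL : 0 < L) (hη : 0 < η)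
    (hlip : ∀ x ∈ ball z₀ η, |Real.log ‖deriv g x‖| ≤ L * ‖x - z₀‖) :
    ∀ δ > (0:ℝ), ∀ α > (0:ℝ), ∃ r₀ > (0:ℝ), ∃ n₀ : ℕ, ∀ n ≥ n₀, ∀ i ≤ n,
      ∀ r : ℝ, 0 < r → r ≤ r₀ * Real.exp (-(n:ℝ) * δ) →
        g^[i] '' ball z₀ r ⊆ ball z₀ (r * Real.exp ((n:ℝ) * δ * α)) :=
  stmt_0_general U hU g hg z₀ hz₀ hfix L η hL hη hlip
end

section
/- Let g : U → ℂ be holomorphic with fixed point z₀, |g'(z₀)| = 1, and |log|g'(x)|| ≤ L·|x − z₀| near z₀. Then for every δ > 0 there exist λ ∈ (0,1) and r₀ > 0 such that for all n large enough, setting rₙ = r₀·exp(−nδ), for all i = 1,…,n: g^i(B(z₀, rₙ)) ⊆ B(z₀, rₙ·(1 + λⁿ)). -/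
/-!
On the disc of radius `ρ` about `z₀` the log-Lipschitz hypothesis gives `|g'| ≤ exp (|L| ρ)`, so by
the mean value inequality `g` maps `B(z₀, ρ)` into `B(z₀, exp (|L| ρ) ρ)`. Iterating `i ≤ n` times
from radius `r = r₀ e^{-nδ}` inflates the radius by at most `exp (2 |L| r n)`, and
`2 |L| r n = 2 |L| r₀ n λⁿ · λⁿ` with `λ = e^{-δ/2}`; since `n λⁿ → 0`, this is eventually at
most `λⁿ / 2`, whence the inflation factor is at most `1 + λⁿ`.
-/

open Metric Function Filter

lemma image_ball_subset_ball_of_norm_deriv_le {𝕜 : Type*} [RCLike 𝕜] {g : 𝕜 → 𝕜} {z₀ : 𝕜}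
    {ρ C : ℝ} (hg : DifferentiableOn 𝕜 g (ball z₀ ρ)) (hfix : g z₀ = z₀) (hC : 0 < C)
    (hbound : ∀ x ∈ ball z₀ ρ, ‖deriv g x‖ ≤ C) :
    g '' ball z₀ ρ ⊆ ball z₀ (C * ρ) := by
  rintro _ ⟨z, hz, rfl⟩
  have hmv : ‖g z - g z₀‖ ≤ C * ‖z - z₀‖ :=
    Convex.norm_image_sub_le_of_norm_deriv_le
      (fun x hx => hg.differentiableAt (isOpen_ball.mem_nhds hx)) hbound (convex_ball z₀ ρ)
      (mem_ball_self (pos_of_mem_ball hz)) hz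
  rw [mem_ball_iff_norm] at hz ⊢
  rw [hfix] at hmv
  exact hmv.trans_lt (mul_lt_mul_of_pos_left hz hC)

lemma iterate_image_ball_subset_ball {α : Type*} [PseudoMetricSpace α] {f : α → α} {x : α}
    {R c r : ℝ} (hf : ∀ ρ ≤ R, f '' ball x ρ ⊆ ball x (c * ρ)) (hc : 1 ≤ c) (hr : 0 ≤ r) :
    ∀ k : ℕ, r * c ^ k ≤ R → f^[k] '' ball x r ⊆ ball x (r * c ^ k)
  | 0, _ => by simp
  | k + 1, hk => by
    have hkR : r * c ^ k ≤ R :=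
      le_trans (mul_le_mul_of_nonneg_left (pow_le_pow_right₀ hc k.le_succ) hr) hk
    calc f^[k + 1] '' ball x r = f '' (f^[k] '' ball x r) := by
          rw [iterate_succ', Set.image_comp]
      _ ⊆ f '' ball x (r * c ^ k) := Set.image_mono (iterate_image_ball_subset_ball hf hc hr k hkR)
      _ ⊆ ball x (c * (r * c ^ k)) := hf _ hkR
      _ = ball x (r * c ^ (k + 1)) := by rw [pow_succ]; ring_nf

lemma norm_le_exp_of_abs_log_norm_le {E F : Type*} [SeminormedAddCommGroup E]
    [SeminormedAddCommGroup F] {f : E → F} {z₀ : E} {L η R : ℝ}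
    (hlip : ∀ x ∈ ball z₀ η, |Real.log ‖f x‖| ≤ L * ‖x - z₀‖) (hR : R ≤ η) :
    ∀ x ∈ ball z₀ R, ‖f x‖ ≤ Real.exp (|L| * R) := by
  intro x hx
  have hxR : ‖x - z₀‖ < R := mem_ball_iff_norm.mp hx
  calc ‖f x‖ ≤ Real.exp (Real.log ‖f x‖) := Real.le_exp_log _
    _ ≤ Real.exp (|L| * R) := by
      gcongr
      calc Real.log ‖f x‖ ≤ |Real.log ‖f x‖| := le_abs_self _
        _ ≤ L * ‖x - z₀‖ := hlip x (ball_subset_ball hR hx)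
        _ ≤ |L| * ‖x - z₀‖ := by gcongr; exact le_abs_self L
        _ ≤ |L| * R := by gcongr

lemma eventually_exp_mul_pow_le_one_add_pow (A : ℝ) {lam : ℝ} (h0 : 0 ≤ lam) (h1 : lam < 1) :
    ∀ᶠ n : ℕ in atTop, Real.exp (A * n * lam ^ n * lam ^ n) ≤ 1 + lam ^ n := by
  have hsmall : ∀ᶠ n : ℕ in atTop, |A * n * lam ^ n| ≤ 1 / 2 := by
    have h : Tendsto (fun n : ℕ => A * (n * lam ^ n)) atTop (nhds 0) := by
      simpa using (tendsto_self_mul_const_pow_of_lt_one h0 h1).const_mul A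
    exact (h.abs.eventually_le_const (by norm_num : |(0 : ℝ)| < 1 / 2)).mono
      fun n hn => by simpa only [mul_assoc] using hn
  filter_upwards [hsmall] with n hn
  have hpow0 : 0 ≤ lam ^ n := pow_nonneg h0 n
  have hpow1 : lam ^ n ≤ 1 := pow_le_one₀ h0 h1.le
  have habs : |A * n * lam ^ n * lam ^ n| ≤ lam ^ n / 2 := by
    rw [abs_mul, abs_of_nonneg hpow0]
    nlinarith
  have hexp := Real.abs_exp_sub_one_le (habs.trans (by linarith))
  linarith [le_abs_self (Real.exp (A * n * lam ^ n * lam ^ n) - 1)]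

theorem stmt_1_general (U : Set ℂ) (hU : IsOpen U) (g : ℂ → ℂ)
    (hg : DifferentiableOn ℂ g U) (z₀ : ℂ) (hz₀ : z₀ ∈ U) (hfix : g z₀ = z₀)
    (L η : ℝ) (hη : 0 < η)
    (hlip : ∀ x ∈ ball z₀ η, |Real.log ‖deriv g x‖| ≤ L * ‖x - z₀‖) :
    ∀ δ > (0:ℝ), ∃ lam : ℝ, 0 < lam ∧ lam < 1 ∧ ∃ r₀ > (0:ℝ), ∃ n₀ : ℕ,
      ∀ n ≥ n₀, ∀ i : ℕ, 1 ≤ i → i ≤ n →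
        g^[i] '' ball z₀ (r₀ * Real.exp (-(n:ℝ) * δ)) ⊆
          ball z₀ (r₀ * Real.exp (-(n:ℝ) * δ) * (1 + lam ^ n)) := by
  intro δ hδ
  obtain ⟨ε, hε, hεU⟩ := Metric.isOpen_iff.mp hU z₀ hz₀
  set lam := Real.exp (-(δ / 2))
  have hlam1 : lam < 1 := Real.exp_lt_one_iff.mpr (by linarith)
  obtain ⟨r₀, hr₀, hr₀η, hr₀ε⟩ : ∃ r₀ > 0, 2 * r₀ ≤ η ∧ 2 * r₀ ≤ ε :=
    ⟨min η ε / 2, by positivity, by linarith [min_le_left η ε], by linarith [min_le_right η ε]⟩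
  obtain ⟨n₀, hn₀⟩ := eventually_atTop.mp
    (eventually_exp_mul_pow_le_one_add_pow (|L| * 2 * r₀) (Real.exp_pos _).le hlam1)
  refine ⟨lam, Real.exp_pos _, hlam1, r₀, hr₀, n₀, fun n hn i _ hin => ?_⟩
  set r := r₀ * Real.exp (-(n:ℝ) * δ)
  have hr : r ≤ r₀ := mul_le_of_le_one_right (by positivity)
    (Real.exp_le_one_iff.mpr (by nlinarith [n.cast_nonneg (α := ℝ)]))
  set c := Real.exp (|L| * (2 * r))
  have hstep : ∀ ρ ≤ 2 * r, g '' ball z₀ ρ ⊆ ball z₀ (c * ρ) := fun ρ hρ =>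
    image_ball_subset_ball_of_norm_deriv_le
      (hg.mono ((ball_subset_ball (by linarith)).trans hεU)) hfix
      (Real.exp_pos _) fun x hx => norm_le_exp_of_abs_log_norm_le hlip
        (by linarith) x (ball_subset_ball hρ hx)
  have hexp : Real.exp (-(n:ℝ) * δ) = lam ^ n * lam ^ n := by
    rw [← Real.exp_nat_mul, ← Real.exp_add]; ring_nf
  have hcn : c ^ n ≤ 1 + lam ^ n := by
    convert hn₀ n hn using 1
    rw [← Real.exp_nat_mul]
    simp only [r, hexp, lam]
    ring_nf
  have hc : 1 ≤ c := Real.one_le_exp (by positivity)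
  have hci : c ^ i ≤ 1 + lam ^ n := (pow_le_pow_right₀ hc hin).trans hcn
  have hlamn : lam ^ n ≤ 1 := pow_le_one₀ (Real.exp_pos _).le hlam1.le
  have hr0 : 0 ≤ r := by positivity
  exact (iterate_image_ball_subset_ball hstep hc hr0 i (by nlinarith)).trans
    (ball_subset_ball (by gcongr))

/-- self-reinforced inclusion for iterates on exponentially small discs. -/
theorem stmt_1 (U : Set ℂ) (hU : IsOpen U) (g : ℂ → ℂ)
    (hg : DifferentiableOn ℂ g U) (z₀ : ℂ) (hz₀ : z₀ ∈ U) (hfix : g z₀ = z₀)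
    (hder : ‖deriv g z₀‖ = 1) (L η : ℝ) (hL : 0 < L) (hη : 0 < η)
    (hlip : ∀ x ∈ ball z₀ η, |Real.log ‖deriv g x‖| ≤ L * ‖x - z₀‖) :
    ∀ δ > (0:ℝ), ∃ lam : ℝ, 0 < lam ∧ lam < 1 ∧ ∃ r₀ > (0:ℝ), ∃ n₀ : ℕ,
      ∀ n ≥ n₀, ∀ i : ℕ, 1 ≤ i → i ≤ n →
        g^[i] '' ball z₀ (r₀ * Real.exp (-(n:ℝ) * δ)) ⊆
          ball z₀ (r₀ * Real.exp (-(n:ℝ) * δ) * (1 + lam ^ n)) :=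
  stmt_1_general U hU g hg z₀ hz₀ hfix L η hη hlip
end
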